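/- Let (f, g, h) be a Darboux triple on S such that h is an immersion whose affine tangent planes avoid the origin, and let h* : S → ℝ³ be the polar of h, i.e. h*·h = −1 and h*·dh = 0. Then df = h* × dg, so (g, f, h*) is a Darboux triple. -/

import Mathlib

open Matrix


lemma bac_cab (a b c : Fin 3 → ℝ) : a ⨯₃ (b ⨯₃ c) = (a ⬝ᵥ c) • b - (a ⬝ᵥ b) • c := by
  simp [crossProduct, dotProduct, Fin.sum_univ_three]
  ext i; fin_cases i <;> simp <;> ring

lemma cross_zero_par {a b : Fin 3 → ℝ} (hb : b ≠ 0) (h : a ⨯₃ b = 0) : ∃ t : ℝ, a = t • b := by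
  have h0 := congrFun h 0
  have h1 := congrFun h 1
  have h2 := congrFun h 2
  simp [crossProduct] at h0 h1 h2
  have hb' : b 0 ≠ 0 ∨ b 1 ≠ 0 ∨ b 2 ≠ 0 := by
    by_contra hc; push_neg at hc
    exact hb (by ext i; fin_cases i <;> simp [hc.1, hc.2.1, hc.2.2])
  rcases hb' with h' | h' | h'
  · refine ⟨a 0 / b 0, ?_⟩; ext i; fin_cases i <;> simp <;> field_simp <;> linarith [h0, h1, h2]
  · refine ⟨a 1 / b 1, ?_⟩; ext i; fin_cases i <;> simp <;> field_simp <;> linarith [h0, h1, h2]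
  · refine ⟨a 2 / b 2, ?_⟩; ext i; fin_cases i <;> simp <;> field_simp <;> linarith [h0, h1, h2]


noncomputable def crossL : (Fin 3 → ℝ) →L[ℝ] (Fin 3 → ℝ) →L[ℝ] (Fin 3 → ℝ) :=
  LinearMap.toContinuousLinearMap
    ((LinearMap.toContinuousLinearMap :
        ((Fin 3 → ℝ) →ₗ[ℝ] (Fin 3 → ℝ)) ≃ₗ[ℝ] ((Fin 3 → ℝ) →L[ℝ] (Fin 3 → ℝ))).toLinearMap
      ∘ₗ (crossProduct : (Fin 3 → ℝ) →ₗ[ℝ] (Fin 3 → ℝ) →ₗ[ℝ] (Fin 3 → ℝ)))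

@[simp] lemma crossL_apply (a b : Fin 3 → ℝ) : crossL a b = a ⨯₃ b := by
  simp [crossL]

lemma stepA (f g h : (Fin 2 → ℝ) → (Fin 3 → ℝ))
    (hf : ContDiff ℝ (⊤ : ℕ∞) f) (hg : ContDiff ℝ (⊤ : ℕ∞) g) (hh : ContDiff ℝ (⊤ : ℕ∞) h)
    (hdarboux : ∀ p (v : Fin 2 → ℝ), fderiv ℝ g p v = h p ⨯₃ fderiv ℝ f p v)
    (p : Fin 2 → ℝ) (u v : Fin 2 → ℝ) :
    fderiv ℝ h p u ⨯₃ fderiv ℝ f p v = fderiv ℝ h p v ⨯₃ fderiv ℝ f p u := by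
  have hf' : ContDiff ℝ (⊤ : ℕ∞) (fderiv ℝ f) := hf.fderiv_right (by simp)
  have hg' : ContDiff ℝ (⊤ : ℕ∞) (fderiv ℝ g) := hg.fderiv_right (by simp)
  have key : ∀ w z : Fin 2 → ℝ, fderiv ℝ (fderiv ℝ g) p w z =
      h p ⨯₃ fderiv ℝ (fderiv ℝ f) p w z + fderiv ℝ h p w ⨯₃ fderiv ℝ f p z := by
    intro w z
    have heq : (fun q => fderiv ℝ g q z) = (fun q => crossL (h q) (fderiv ℝ f q z)) := by
      funext q; simp [hdarboux q z]
    have hL : fderiv ℝ (fun q => fderiv ℝ g q z) p =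
        (fderiv ℝ (fderiv ℝ g) p).flip z := by
      rw [fderiv_clm_apply (hg'.differentiable (by simp) p) (differentiableAt_const z)]
      ext w'; simp
    have hcd : DifferentiableAt ℝ (fun q => crossL (h q)) p :=
      (crossL.differentiable.comp (hh.differentiable (by simp))).differentiableAt
    have hcf : fderiv ℝ (fun q => crossL (h q)) p = crossL.comp (fderiv ℝ h p) := by
      rw [show (fun q => crossL (h q)) = crossL ∘ h from rfl,
        fderiv_comp p crossL.differentiableAt (hh.differentiable (by simp) p)]
      simp
    have hud : DifferentiableAt ℝ (fun q => fderiv ℝ f q z) p := by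
      exact ((hf'.differentiable (by simp) p).clm_apply (differentiableAt_const z))
    have hR : fderiv ℝ (fun q => crossL (h q) (fderiv ℝ f q z)) p =
        (crossL (h p)).comp (fderiv ℝ (fun q => fderiv ℝ f q z) p)
          + (crossL.comp (fderiv ℝ h p)).flip (fderiv ℝ f p z) := by
      rw [fderiv_clm_apply hcd hud, hcf]
    have hfz : fderiv ℝ (fun q => fderiv ℝ f q z) p = (fderiv ℝ (fderiv ℝ f) p).flip z := by
      rw [fderiv_clm_apply (hf'.differentiable (by simp) p) (differentiableAt_const z)]
      ext w'; simp
    have hflip : (fderiv ℝ (fderiv ℝ g) p).flip z =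
        (crossL (h p)).comp ((fderiv ℝ (fderiv ℝ f) p).flip z)
          + (crossL.comp (fderiv ℝ h p)).flip (fderiv ℝ f p z) := by
      rw [← hL, heq, hR, hfz]
    have := congrFun (congrArg DFunLike.coe hflip) w
    simpa using this
  have symg := (hg.contDiffAt (x := p)).isSymmSndFDerivAt (by rw [minSmoothness_of_isRCLikeNormedField]; exact WithTop.coe_le_coe.mpr le_top)
  have symf := (hf.contDiffAt (x := p)).isSymmSndFDerivAt (by rw [minSmoothness_of_isRCLikeNormedField]; exact WithTop.coe_le_coe.mpr le_top)
  have cal : h p ⨯₃ (fderiv ℝ (fderiv ℝ f) p u v) + fderiv ℝ h p u ⨯₃ fderiv ℝ f p v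
      = h p ⨯₃ (fderiv ℝ (fderiv ℝ f) p u v) + fderiv ℝ h p v ⨯₃ fderiv ℝ f p u := by
    calc h p ⨯₃ (fderiv ℝ (fderiv ℝ f) p u v) + fderiv ℝ h p u ⨯₃ fderiv ℝ f p v
        = fderiv ℝ (fderiv ℝ g) p u v := (key u v).symm
      _ = fderiv ℝ (fderiv ℝ g) p v u := symg u v
      _ = h p ⨯₃ (fderiv ℝ (fderiv ℝ f) p v u) + fderiv ℝ h p v ⨯₃ fderiv ℝ f p u := key v u
      _ = h p ⨯₃ (fderiv ℝ (fderiv ℝ f) p u v) + fderiv ℝ h p v ⨯₃ fderiv ℝ f p u := by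
          rw [symf v u]
  exact add_left_cancel cal

/-- For a Darboux triple `(f, g, h)` with `h` an immersion whose affine tangent
planes avoid the origin, and `h*` the polar of `h` (`h*·h = −1`, `h*·dh = 0`), one has
`df = h* × dg`, so `(g, f, h*)` is a Darboux triple. -/
theorem darboux_stmt6
    (f g h hstar : (Fin 2 → ℝ) → (Fin 3 → ℝ))
    (hf : ContDiff ℝ (⊤ : ℕ∞) f) (hg : ContDiff ℝ (⊤ : ℕ∞) g) (hh : ContDiff ℝ (⊤ : ℕ∞) h)
    (hstar_smooth : ContDiff ℝ (⊤ : ℕ∞) hstar)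
    (himmh : ∀ p, Function.Injective (fderiv ℝ h p))
    (hdarboux : ∀ p (v : Fin 2 → ℝ), fderiv ℝ g p v = h p ⨯₃ fderiv ℝ f p v)
    (hpolar1 : ∀ p, hstar p ⬝ᵥ h p = -1)
    (hpolar2 : ∀ p (v : Fin 2 → ℝ), hstar p ⬝ᵥ fderiv ℝ h p v = 0) :
    ∀ p (v : Fin 2 → ℝ), fderiv ℝ f p v = hstar p ⨯₃ fderiv ℝ g p v := by
  intro p v
  set b1 : Fin 2 → ℝ := ![1, 0] with hb1
  set b2 : Fin 2 → ℝ := ![0, 1] with hb2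
  set e1 := fderiv ℝ h p b1 with he1
  set e2 := fderiv ℝ h p b2 with he2
  set n := hstar p with hn
  set w := e1 ⨯₃ e2 with hw
  -- e1 × e2 ≠ 0
  have hwne : w ≠ 0 := by
    intro hzero
    have he1ne : e1 ≠ 0 := by
      intro hz
      have hb : b1 = 0 := himmh p (by rw [map_zero]; exact hz)
      have := congrFun hb 0; simp [hb1] at this
    have h21 : e2 ⨯₃ e1 = 0 := by
      rw [← cross_anticomm, ← hw, hzero, neg_zero]
    obtain ⟨t, ht⟩ := cross_zero_par he1ne h21
    have : b2 = t • b1 := by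
      apply himmh p
      rw [ContinuousLinearMap.map_smul]
      exact ht
    have := congrFun this 1; simp [hb1, hb2] at this
  -- n ⊥ e1, e2
  have hne1 : n ⬝ᵥ e1 = 0 := hpolar2 p b1
  have hne2 : n ⬝ᵥ e2 = 0 := hpolar2 p b2
  -- n parallel to w
  have hnw : n ⨯₃ w = 0 := by
    rw [hw, bac_cab, hne1, hne2]; simp
  obtain ⟨t, hnt⟩ := cross_zero_par hwne hnw
  -- the symmetric relation
  have hsym := stepA f g h hf hg hh hdarboux p b1 b2
  rw [← he1, ← he2] at hsym
  -- w ⊥ df b1, df b2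
  have hw1 : fderiv ℝ f p b1 ⬝ᵥ w = 0 := by
    rw [hw, triple_product_permutation, ← hsym]
    exact dot_self_cross _ _
  have hw2 : fderiv ℝ f p b2 ⬝ᵥ w = 0 := by
    have hA : e2 ⬝ᵥ (e1 ⨯₃ fderiv ℝ f p b2) = 0 := by
      rw [hsym]; exact dot_self_cross _ _
    have hB : fderiv ℝ f p b2 ⬝ᵥ (e2 ⨯₃ e1) = 0 := by
      rw [triple_product_permutation]; exact hA
    rw [hw, show e1 ⨯₃ e2 = -(e2 ⨯₃ e1) from (cross_anticomm e2 e1).symm ▸ rfl,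
      dotProduct_neg, hB, neg_zero]
  -- n ⊥ df v
  have hndf : n ⬝ᵥ fderiv ℝ f p v = 0 := by
    have hv : v = v 0 • b1 + v 1 • b2 := by
      funext i; fin_cases i <;> simp [hb1, hb2]
    rw [hnt, smul_dotProduct]
    have : w ⬝ᵥ fderiv ℝ f p v = 0 := by
      rw [hv, map_add, ContinuousLinearMap.map_smul, ContinuousLinearMap.map_smul,
        dotProduct_add, dotProduct_smul, dotProduct_smul,
        dotProduct_comm w (fderiv ℝ f p b1), hw1,
        dotProduct_comm w (fderiv ℝ f p b2), hw2]
      simp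
    rw [this]; simp
  -- conclude
  rw [hdarboux p v, bac_cab, hndf, hpolar1 p]
  simp
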